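/- Let $P^{\uparrow} \subseteq \mathbb{R}^E$ be the dominant of a polytope, let $\overline{uv}$ be a bounded edge of $P^{\uparrow}$ with midpoint $x^0$ and direction $w \in \{-1,0,1\}^E$. Then there exist strictly positive, continuous, strictly increasing affine cost functions $c_e(t) = -h_e + 2\gamma(t - x^0_e)$ (for suitable $h < 0$ and $\gamma > 0$) such that $x^0$ is the unique minimizer over $P^{\uparrow}$ of the Beckmann potential $\Phi(x) = \sum_{e \in E} \int_0^{x_e} c_e(t)\,dt$. -/

import Mathlib

open Finset MeasureTheory

/-- `segment ℝ u v` (with `u ≠ v`) is a (bounded) edge of `Q` when it is an extreme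
subset of `Q`, i.e. a one-dimensional face. -/
def IsEdgeOf {V : Type*} [AddCommGroup V] [Module ℝ V] (Q : Set V) (u v : V) : Prop :=
  u ≠ v ∧ IsExtreme ℝ Q (segment ℝ u v)

/-- The dominant of a set `Q ⊆ ℝ^E`: `Q + ℝ₊^E`. -/
def dominant {E : Type*} (Q : Set (E → ℝ)) : Set (E → ℝ) :=
  {x | ∃ y ∈ Q, y ≤ x}

/-- The Beckmann potential. -/
noncomputable def beckmann {E : Type*} [Fintype E] (c : E → ℝ → ℝ) (x : E → ℝ) : ℝ :=
  ∑ e, ∫ t in (0:ℝ)..(x e), c e t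

/-!
The edge is bounded and `P↑` is closed upwards, so no coordinate of its midpoint `x⁰` can be
lowered inside `P↑`: extremality would otherwise put a whole upward ray through `x⁰` into the
edge. Hence, for each `e`, the vector `-𝟙ₑ` lies outside the (finitely generated, hence closed)
tangent cone of `P↑` at `x⁰`, and Farkas' lemma gives a cost vector `cᵉ ≥ 0` with `cᵉₑ > 0`
that is minimised over `P↑` at `x⁰`. Then `h = -∑ₑ cᵉ < 0` is maximised over `P↑` at `x⁰`, and
`Φ(y) - Φ(x⁰) = ⟨h, x⁰ - y⟩ + γ‖y - x⁰‖²` is positive for `y ≠ x⁰`; a small `γ` keeps the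
costs positive on `ℝ≥0`.
-/

namespace PointedCone

section LinearOrderedField

variable {𝕜 V : Type*} [Field 𝕜] [LinearOrder 𝕜] [IsStrictOrderedRing 𝕜]
  [AddCommGroup V] [Module 𝕜 V]

lemma mem_hull_finset_iff {s : Finset V} {x : V} :
    x ∈ hull 𝕜 (s : Set V) ↔ ∃ f : V → 𝕜, (∀ g ∈ s, 0 ≤ f g) ∧ ∑ g ∈ s, f g • g = x := by
  classical
  rw [Submodule.mem_span_finset]
  constructor
  · rintro ⟨f, -, rfl⟩
    exact ⟨fun g => f g, fun g _ => (f g).2, rfl⟩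
  · rintro ⟨f, hf, rfl⟩
    refine ⟨fun g => if hg : g ∈ s then ⟨f g, hf g hg⟩ else 0, fun g hg => ?_, ?_⟩
    · by_contra hgs
      exact hg (dif_neg hgs)
    · refine Finset.sum_congr rfl fun g hg => ?_
      simp [hg, Nonneg.mk_smul]

lemma exists_sum_smul_eq_zero_of_not_linearIndepOn {s : Finset V}
    (hs : ¬LinearIndepOn 𝕜 id (s : Set V)) :
    ∃ c : V → 𝕜, ∑ g ∈ s, c g • g = 0 ∧ ∃ g ∈ s, 0 < c g := by
  obtain ⟨c, hc, g, hg, hcg⟩ := not_linearIndepOn_finset_iff.1 hs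
  rcases hcg.lt_or_gt with hneg | hpos
  · refine ⟨-c, ?_, g, hg, neg_pos.2 hneg⟩
    simpa [neg_smul, Finset.sum_neg_distrib] using hc
  · exact ⟨c, hc, g, hg, hpos⟩

/-- As in `mem_convexHull_erase`: subtract from the coefficients the largest multiple of a linear
relation that keeps them nonnegative; one of them then vanishes. -/
lemma exists_mem_hull_erase_of_not_linearIndepOn [DecidableEq V] {s : Finset V}
    (hs : ¬LinearIndepOn 𝕜 id (s : Set V)) {x : V} (hx : x ∈ hull 𝕜 (s : Set V)) :
    ∃ g ∈ s, x ∈ hull 𝕜 ((s.erase g : Finset V) : Set V) := by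
  obtain ⟨c, hc, hpos⟩ := exists_sum_smul_eq_zero_of_not_linearIndepOn hs
  obtain ⟨l, hl, rfl⟩ := mem_hull_finset_iff.1 hx
  obtain ⟨g₀, hg₀, hmin⟩ := Finset.exists_min_image (s.filter (0 < c ·)) (fun g => l g / c g)
    (by simpa [Finset.filter_nonempty_iff] using hpos)
  rw [Finset.mem_filter] at hg₀
  set t := l g₀ / c g₀
  have ht : 0 ≤ t := div_nonneg (hl g₀ hg₀.1) hg₀.2.le
  have hl' : ∀ g ∈ s, 0 ≤ l g - t * c g := by
    intro g hg
    rcases le_or_gt (c g) 0 with hcg | hcg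
    · nlinarith [hl g hg]
    · have := hmin g (Finset.mem_filter.2 ⟨hg, hcg⟩)
      rw [le_div_iff₀ hcg] at this
      linarith
  have hsum : ∑ g ∈ s, (l g - t * c g) • g = ∑ g ∈ s, l g • g := by
    simp only [sub_smul, Finset.sum_sub_distrib, mul_smul, ← Finset.smul_sum, hc, smul_zero,
      sub_zero]
  refine ⟨g₀, hg₀.1, mem_hull_finset_iff.2 ⟨fun g => l g - t * c g,
    fun g hg => hl' g (Finset.mem_of_mem_erase hg), ?_⟩⟩
  rw [← hsum, ← Finset.sum_erase_add _ _ hg₀.1]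
  simp [t, hg₀.2.ne']

lemma exists_linearIndepOn_subset_mem_hull {s : Finset V} {x : V} (hx : x ∈ hull 𝕜 (s : Set V)) :
    ∃ t ⊆ s, LinearIndepOn 𝕜 id (t : Set V) ∧ x ∈ hull 𝕜 (t : Set V) := by
  classical
  induction s using Finset.strongInduction with
  | H s ih =>
    by_cases hs : LinearIndepOn 𝕜 id (s : Set V)
    · exact ⟨s, subset_rfl, hs, hx⟩
    obtain ⟨g, hg, hxg⟩ := exists_mem_hull_erase_of_not_linearIndepOn hs hx
    obtain ⟨t, hts, ht, hxt⟩ := ih _ (Finset.erase_ssubset hg) hxg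
    exact ⟨t, hts.trans (Finset.erase_subset g s), ht, hxt⟩

end LinearOrderedField

section NormedSpace

variable {V : Type*} [NormedAddCommGroup V] [NormedSpace ℝ V]

lemma isClosed_hull_of_linearIndepOn {s : Finset V} (hs : LinearIndepOn ℝ id (s : Set V)) :
    IsClosed (hull ℝ (s : Set V) : Set V) := by
  let L : (s → ℝ) →ₗ[ℝ] V := Fintype.linearCombination ℝ ((↑) : s → V)
  have himage : (hull ℝ (s : Set V) : Set V) = L '' Set.Ici 0 := by
    ext x
    simp only [SetLike.mem_coe, Submodule.mem_span_finset', Set.mem_image, Set.mem_Ici, L,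
      Fintype.linearCombination_apply]
    constructor
    · rintro ⟨f, rfl⟩
      exact ⟨fun g => f g, fun g => (f g).2, rfl⟩
    · rintro ⟨c, hc, rfl⟩
      exact ⟨fun g => ⟨c g, hc g⟩, rfl⟩
  rw [himage]
  exact (L.isClosedEmbedding_of_injective (LinearMap.ker_eq_bot.2
    hs.fintypeLinearCombination_injective)).isClosedMap _ isClosed_Ici

lemma isClosed_hull_finset (s : Finset V) : IsClosed (hull ℝ (s : Set V) : Set V) := by
  let T := {t : Finset V | t ⊆ s ∧ LinearIndepOn ℝ id (t : Set V)}
  have hT : T.Finite := s.powerset.finite_toSet.subset fun t ht => Finset.mem_powerset.2 ht.1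
  have hunion : (hull ℝ (s : Set V) : Set V) = ⋃ t ∈ T, (hull ℝ (t : Set V) : Set V) := by
    ext x
    simp only [SetLike.mem_coe, Set.mem_iUnion, exists_prop]
    constructor
    · intro hx
      obtain ⟨t, hts, ht, hxt⟩ := exists_linearIndepOn_subset_mem_hull hx
      exact ⟨t, ⟨hts, ht⟩, hxt⟩
    · rintro ⟨t, ⟨hts, -⟩, hxt⟩
      exact Submodule.span_mono (Finset.coe_subset.2 hts) hxt
  rw [hunion]
  exact hT.isClosed_biUnion fun t ht => isClosed_hull_of_linearIndepOn ht.2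

theorem exists_dual_nonneg_of_notMem_hull {s : Finset V} {b : V} (hb : b ∉ hull ℝ (s : Set V)) :
    ∃ f : StrongDual ℝ V, (∀ g ∈ s, 0 ≤ f g) ∧ f b < 0 := by
  obtain ⟨f, hf, hfb⟩ := ProperCone.hyperplane_separation_point
    ⟨hull ℝ (s : Set V), isClosed_hull_finset s⟩ hb
  exact ⟨f, fun g hg => hf g (subset_hull hg), hfb⟩

end NormedSpace

end PointedCone

theorem Convex.exists_pos_add_smul_mem_of_mem_hull {V : Type*} [AddCommGroup V] [Module ℝ V]
    {D : Set V} (hD : Convex ℝ D) {x : V} (hx : x ∈ D) {S : Set V} (hS : ∀ s ∈ S, x + s ∈ D)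
    {d : V} (hd : d ∈ PointedCone.hull ℝ S) : ∃ r : ℝ, 0 < r ∧ x + r • d ∈ D := by
  set K := (x + ·) ⁻¹' D
  have hK : Convex ℝ K := hD.translate_preimage_right x
  have hpointed : (ConvexCone.hull ℝ K).Pointed :=
    ConvexCone.subset_hull (by simpa [K] using hx)
  have hle : PointedCone.hull ℝ S ≤ (ConvexCone.hull ℝ K).toPointedCone hpointed :=
    Submodule.span_le.2 fun s hs => ConvexCone.subset_hull (hS s hs)
  obtain ⟨r, hr, z, hz, rfl⟩ := (ConvexCone.mem_hull_of_convex hK).1 (hle hd)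
  exact ⟨r⁻¹, inv_pos.2 hr, by simpa [smul_smul, hr.ne', K] using hz⟩

theorem IsExtreme.sub_smul_notMem {V : Type*} [AddCommGroup V] [Module ℝ V] {D F : Set V}
    (hF : IsExtreme ℝ D F) {x d : V} (hx : x ∈ F) {t : ℝ} (ht : 0 < t) (htD : x + t • d ∈ D)
    (htF : x + t • d ∉ F) {ε : ℝ} (hε : 0 < ε) : x - ε • d ∉ D := by
  intro hεD
  refine htF (hF.right_mem_of_mem_openSegment hεD htD hx
    ⟨t / (ε + t), ε / (ε + t), by positivity, by positivity, by field_simp; ring, ?_⟩)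
  rw [← sub_eq_zero]
  match_scalars <;> field_simp <;> ring

open Filter Topology in
lemma exists_pos_forall_mul_lt {ι : Type*} [Finite ι] (a b : ι → ℝ) (hb : ∀ i, 0 < b i) :
    ∃ γ : ℝ, 0 < γ ∧ ∀ i, γ * a i < b i := by
  have hsmall : ∀ᶠ γ in 𝓝[>] (0 : ℝ), ∀ i, γ * a i < b i := by
    refine eventually_all.2 fun i => nhdsWithin_le_nhds ?_
    have : Tendsto (fun γ : ℝ => γ * a i) (𝓝 0) (𝓝 0) := by
      simpa using (continuous_mul_const (a i)).tendsto 0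
    exact this.eventually (gt_mem_nhds (hb i))
  exact (hsmall.and self_mem_nhdsWithin).exists.imp fun γ h => ⟨h.2, h.1⟩

section Dominant

variable {E : Type*}

lemma subset_dominant (Q : Set (E → ℝ)) : Q ⊆ dominant Q := fun x hx => ⟨x, hx, le_rfl⟩

lemma add_mem_dominant {Q : Set (E → ℝ)} {x r : E → ℝ} (hx : x ∈ dominant Q) (hr : 0 ≤ r) :
    x + r ∈ dominant Q := by
  obtain ⟨y, hy, hyx⟩ := hx
  exact ⟨y, hy, hyx.trans (le_add_of_nonneg_right hr)⟩

lemma Convex.dominant {Q : Set (E → ℝ)} (hQ : Convex ℝ Q) : Convex ℝ (dominant Q) := by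
  rintro x ⟨p, hp, hpx⟩ y ⟨q, hq, hqy⟩ a b ha hb hab
  exact ⟨a • p + b • q, hQ hp hq ha hb hab,
    add_le_add (smul_le_smul_of_nonneg_left hpx ha) (smul_le_smul_of_nonneg_left hqy hb)⟩

lemma sub_smul_single_notMem_dominant [DecidableEq E] {Q F : Set (E → ℝ)}
    (hF : IsExtreme ℝ (dominant Q) F) (hFb : BddAbove F) {x : E → ℝ} (hx : x ∈ F) (e : E)
    {ε : ℝ} (hε : 0 < ε) : x - ε • Pi.single e 1 ∉ dominant Q := by
  obtain ⟨M, hM⟩ := hFb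
  have ht : 0 < M e - x e + 1 := by linarith [hM hx e]
  refine hF.sub_smul_notMem hx ht (add_mem_dominant (hF.1 hx) ?_) (fun hmem => ?_) hε
  · exact smul_nonneg ht.le (Pi.single_nonneg.2 zero_le_one)
  · have := hM hmem e
    simp only [Pi.add_apply, Pi.smul_apply, Pi.single_eq_same, smul_eq_mul, mul_one] at this
    linarith

variable [Fintype E]

lemma isMinOn_dotProduct_dominant_convexHull {Vs : Finset (E → ℝ)} {c x : E → ℝ} (hc : 0 ≤ c)
    (hVs : ∀ p ∈ Vs, c ⬝ᵥ x ≤ c ⬝ᵥ p) : IsMinOn (c ⬝ᵥ ·) (dominant (convexHull ℝ ↑Vs)) x := by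
  rintro y ⟨p, hp, hpy⟩
  have hlin : IsLinearMap ℝ (c ⬝ᵥ ·) := ⟨dotProduct_add c, fun r v => dotProduct_smul r c v⟩
  have hp' : c ⬝ᵥ x ≤ c ⬝ᵥ p := convexHull_min hVs (convex_halfSpace_ge hlin _) hp
  exact hp'.trans (dotProduct_le_dotProduct_of_nonneg_left hpy hc)

lemma exists_nonneg_isMinOn_dominant_convexHull [DecidableEq E] {Vs : Finset (E → ℝ)}
    {x : E → ℝ} (hx : x ∈ dominant (convexHull ℝ ↑Vs)) (e : E)
    (he : ∀ ε : ℝ, 0 < ε → x - ε • Pi.single e 1 ∉ dominant (convexHull ℝ ↑Vs)) :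
    ∃ c : E → ℝ, 0 ≤ c ∧ 0 < c e ∧ IsMinOn (c ⬝ᵥ ·) (dominant (convexHull ℝ ↑Vs)) x := by
  -- `S` generates the tangent cone of the dominant at `x`.
  set S := Vs.image (· - x) ∪ Finset.univ.image (Pi.single · 1)
  have hb : -Pi.single e 1 ∉ PointedCone.hull ℝ (S : Set (E → ℝ)) := by
    intro hb
    have hS : ∀ s ∈ (S : Set (E → ℝ)), x + s ∈ dominant (convexHull ℝ ↑Vs) := by
      intro s hs
      rcases Finset.mem_union.1 hs with hs | hs
      · obtain ⟨p, hp, rfl⟩ := Finset.mem_image.1 hs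
        exact subset_dominant _ (subset_convexHull ℝ _ (by simpa using hp))
      · obtain ⟨i, -, rfl⟩ := Finset.mem_image.1 hs
        exact add_mem_dominant hx (Pi.single_nonneg.2 zero_le_one)
    obtain ⟨r, hr, hxr⟩ :=
      (convex_convexHull ℝ _).dominant.exists_pos_add_smul_mem_of_mem_hull hx hS hb
    exact he r hr (by simpa [sub_eq_add_neg] using hxr)
  obtain ⟨f, hf, hfb⟩ := PointedCone.exists_dual_nonneg_of_notMem_hull hb
  set c : E → ℝ := fun i => f (Pi.single i 1)
  have hfc : ∀ y, f y = c ⬝ᵥ y := fun y => by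
    rw [← ContinuousLinearMap.coe_coe, LinearMap.pi_apply_eq_sum_univ f.toLinearMap y]
    simp only [c, dotProduct, smul_eq_mul, mul_comm]
    congr! with i j
    simp [Pi.single_apply, eq_comm]
  have hc : 0 ≤ c := fun i =>
    hf _ (Finset.mem_union_right _ (Finset.mem_image_of_mem _ (Finset.mem_univ i)))
  refine ⟨c, hc, ?_, isMinOn_dotProduct_dominant_convexHull hc fun p hp => ?_⟩
  · simpa [hfc, dotProduct_neg, dotProduct_single_one] using hfb
  · have := hf (p - x) (Finset.mem_union_left _ (Finset.mem_image_of_mem _ hp))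
    rw [hfc, dotProduct_sub] at this
    linarith

theorem exists_neg_isMaxOn_dominant_convexHull {Vs : Finset (E → ℝ)} {F : Set (E → ℝ)}
    (hF : IsExtreme ℝ (dominant (convexHull ℝ ↑Vs)) F) (hFb : BddAbove F) {x : E → ℝ}
    (hx : x ∈ F) :
    ∃ h : E → ℝ, (∀ e, h e < 0) ∧ IsMaxOn (h ⬝ᵥ ·) (dominant (convexHull ℝ ↑Vs)) x := by
  classical
  choose c hc hce hcx using fun e => exists_nonneg_isMinOn_dominant_convexHull (hF.1 hx) e
    fun ε hε => sub_smul_single_notMem_dominant hF hFb hx e hε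
  refine ⟨-∑ e, c e, fun i => ?_, fun y hy => ?_⟩
  · have : 0 < ∑ e, c e i := Finset.sum_pos' (fun e _ => hc e i) ⟨i, Finset.mem_univ i, hce i⟩
    simpa [Finset.sum_apply] using this
  · simpa [neg_dotProduct, sum_dotProduct] using
      Finset.sum_le_sum fun e _ => isMinOn_iff.1 (hcx e) y hy

end Dominant

section Beckmann

variable {E : Type*} [Fintype E]

lemma integral_add_two_mul_mul_sub (a γ c x : ℝ) :
    ∫ t in (0 : ℝ)..x, (a + 2 * γ * (t - c)) = a * x + γ * ((x - c) ^ 2 - c ^ 2) := by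
  have hderiv (t : ℝ) :
      HasDerivAt (fun t => a * t + γ * (t - c) ^ 2) (a + 2 * γ * (t - c)) t :=
    (((hasDerivAt_id' t).const_mul a).add
      (((hasDerivAt_id' t).sub_const c).pow 2 |>.const_mul γ)).congr_deriv (by ring)
  rw [intervalIntegral.integral_eq_sub_of_hasDerivAt (fun t _ => hderiv t)
    (by apply Continuous.intervalIntegrable; fun_prop)]
  ring

lemma beckmann_affine_cost (h : E → ℝ) (γ : ℝ) (x0 x : E → ℝ) :
    beckmann (fun e t => -h e + 2 * γ * (t - x0 e)) x =
      -(h ⬝ᵥ x) + γ * ∑ e, (x e - x0 e) ^ 2 - γ * ∑ e, x0 e ^ 2 := by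
  rw [beckmann, Finset.sum_congr rfl fun e _ => integral_add_two_mul_mul_sub (-h e) γ (x0 e) (x e)]
  simp only [dotProduct, Finset.mul_sum, ← Finset.sum_neg_distrib, ← Finset.sum_sub_distrib,
    ← Finset.sum_add_distrib]
  exact Finset.sum_congr rfl fun e _ => by ring

lemma beckmann_affine_cost_lt {S : Set (E → ℝ)} {h x0 y : E → ℝ} {γ : ℝ} (hγ : 0 < γ)
    (hmax : IsMaxOn (h ⬝ᵥ ·) S x0) (hy : y ∈ S) (hne : y ≠ x0) :
    beckmann (fun e t => -h e + 2 * γ * (t - x0 e)) x0 <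
      beckmann (fun e t => -h e + 2 * γ * (t - x0 e)) y := by
  obtain ⟨e, he⟩ := Function.ne_iff.1 hne
  have hsq : 0 < ∑ e, (y e - x0 e) ^ 2 :=
    Finset.sum_pos' (fun _ _ => sq_nonneg _)
      ⟨e, Finset.mem_univ e, by positivity [sub_ne_zero.2 he]⟩
  have hhy : h ⬝ᵥ y ≤ h ⬝ᵥ x0 := hmax hy
  have hx0 : ∑ e, (x0 e - x0 e) ^ 2 = 0 := by simp
  rw [beckmann_affine_cost, beckmann_affine_cost, hx0]
  nlinarith [mul_pos hγ hsq]

end Beckmann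

theorem stmt9_general {E : Type*} [Fintype E] (P : Set (E → ℝ))
    (hpoly : ∃ Vs : Finset (E → ℝ), P = convexHull ℝ (↑Vs : Set (E → ℝ)))
    (u v : E → ℝ) (hedge : IsEdgeOf (dominant P) u v)
    (x0 : E → ℝ) (hx0 : x0 = (1/2 : ℝ) • (u + v)) :
    ∃ (h : E → ℝ) (γ : ℝ), (∀ e, h e < 0) ∧ 0 < γ ∧
      (∀ e, ∀ t : ℝ, 0 ≤ t → 0 < -h e + 2 * γ * (t - x0 e)) ∧
      x0 ∈ dominant P ∧
      (∀ y ∈ dominant P, y ≠ x0 →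
        beckmann (fun e t => -h e + 2 * γ * (t - x0 e)) x0 <
          beckmann (fun e t => -h e + 2 * γ * (t - x0 e)) y) := by
  obtain ⟨Vs, rfl⟩ := hpoly
  have hx0uv : x0 ∈ segment ℝ u v :=
    ⟨1 / 2, 1 / 2, by norm_num, by norm_num, by norm_num, by rw [hx0]; module⟩
  have hbdd : BddAbove (segment ℝ u v) :=
    ⟨u ⊔ v, (convex_Iic (u ⊔ v)).segment_subset (Set.mem_Iic.2 le_sup_left)
      (Set.mem_Iic.2 le_sup_right)⟩
  obtain ⟨h, hneg, hmax⟩ := exists_neg_isMaxOn_dominant_convexHull hedge.2 hbdd hx0uv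
  obtain ⟨γ, hγ, hγx0⟩ := exists_pos_forall_mul_lt x0 (-h) fun e => neg_pos.2 (hneg e)
  refine ⟨h, γ / 2, hneg, half_pos hγ, fun e t ht => ?_, hedge.2.1 hx0uv,
    fun y hy hne => beckmann_affine_cost_lt (half_pos hγ) hmax hy hne⟩
  have : γ * x0 e < -h e := hγx0 e
  nlinarith [mul_nonneg hγ.le ht]

theorem stmt9 {E : Type*} [Fintype E] [DecidableEq E] (P : Set (E → ℝ))
    (hpoly : ∃ Vs : Finset (E → ℝ), P = convexHull ℝ (↑Vs : Set (E → ℝ)))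
    (hPnn : P ⊆ {x | ∀ e, 0 ≤ x e})
    (u v : E → ℝ) (hedge : IsEdgeOf (dominant P) u v)
    (w : E → ℝ) (hw : ∀ e, w e = -1 ∨ w e = 0 ∨ w e = 1)
    (hpar : ∃ t : ℝ, t ≠ 0 ∧ v - u = t • w)
    (x0 : E → ℝ) (hx0 : x0 = (1/2 : ℝ) • (u + v)) :
    ∃ (h : E → ℝ) (γ : ℝ), (∀ e, h e < 0) ∧ 0 < γ ∧
      (∀ e, ∀ t : ℝ, 0 ≤ t → 0 < -h e + 2 * γ * (t - x0 e)) ∧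
      x0 ∈ dominant P ∧
      (∀ y ∈ dominant P, y ≠ x0 →
        beckmann (fun e t => -h e + 2 * γ * (t - x0 e)) x0 <
          beckmann (fun e t => -h e + 2 * γ * (t - x0 e)) y) :=
  stmt9_general P hpoly u v hedge x0 hx0
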